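/- For every λ-term M, free variable x of M, and continuation name p, the name x occurs in ⟦M⟧p only in output subject position (never as the subject of an input). -/
import Mathlib


/-! A formalization of a polyadic π-calculus with forwarder (link) processes,
its (early) labelled transition system, strong/weak bisimilarity and the
expansion preorder, together with the call-by-value λ-calculus and
Milner's encoding, the internal-π encoding, and its optimised variant. -/

/-- π-calculus processes.  Names are natural numbers.  Forwarders (links)
between continuation names (`fwdC p q` is `p ⇝ q`) and value names
(`fwdV x y` is `x ⇝ y`) are primitive, with transition rules corresponding to
their recursive definitions:
`p⇝q = p(x).νy(q̄⟨y⟩ | y⇝x)` and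
`x⇝y = !x(p,x').νq,y'(ȳ⟨q,y'⟩ | q⇝p | y'⇝x')`. -/
inductive Proc where
  | nil  : Proc
  | out  : ℕ → List ℕ → Proc → Proc    -- output prefix  x̄⟨ỹ⟩.P
  | inp  : ℕ → List ℕ → Proc → Proc    -- input prefix   x(ỹ).P
  | par  : Proc → Proc → Proc
  | nu   : ℕ → Proc → Proc             -- restriction    νx P
  | rep  : Proc → Proc                 -- replication    !P
  | fwdC : ℕ → ℕ → Proc                -- continuation-name forwarder p ⇝ q
  | fwdV : ℕ → ℕ → Proc                -- value-name forwarder        x ⇝ y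
  deriving DecidableEq

/-- Bound output `x̄(ỹ).P  =  νỹ (x̄⟨ỹ⟩.P)`. -/
def Proc.boundOut (x : ℕ) (ys : List ℕ) (P : Proc) : Proc :=
  ys.foldr Proc.nu (Proc.out x ys P)

/-- Restriction of a list of names. -/
def Proc.nuList (ys : List ℕ) (P : Proc) : Proc := ys.foldr Proc.nu P

/-- Renaming of (all) names of a process. -/
def Proc.rename (σ : ℕ → ℕ) : Proc → Proc
  | .nil => .nil
  | .out c vs P => .out (σ c) (vs.map σ) (P.rename σ)
  | .inp c ys P => .inp (σ c) (ys.map σ) (P.rename σ)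
  | .par P Q => .par (P.rename σ) (Q.rename σ)
  | .nu y P => .nu (σ y) (P.rename σ)
  | .rep P => .rep (P.rename σ)
  | .fwdC p q => .fwdC (σ p) (σ q)
  | .fwdV x y => .fwdV (σ x) (σ y)

/-- The simultaneous substitution of parameters `ys` by values `vs`. -/
def listSubst : List ℕ → List ℕ → ℕ → ℕ
  | [], _, n => n
  | _, [], n => n
  | y :: ys, v :: vs, n => if n = y then v else listSubst ys vs n

/-- Free names of a process. -/
def Proc.fn : Proc → Finset ℕ
  | .nil => ∅
  | .out c vs P => insert c (vs.toFinset ∪ P.fn)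
  | .inp c ys P => insert c (P.fn \ ys.toFinset)
  | .par P Q => P.fn ∪ Q.fn
  | .nu y P => P.fn \ {y}
  | .rep P => P.fn
  | .fwdC p q => {p, q}
  | .fwdV x y => {x, y}

/-- Actions of the (early) labelled transition system: internal moves,
(early) input of values `vs` at a channel, and output of values `vs` at a
channel, extruding the bound (private) names `bs`. -/
inductive Act where
  | tau : Act
  | inp : ℕ → List ℕ → Act
  | out : ℕ → List ℕ → List ℕ → Act      -- out ch bs vs : bound names bs ⊆ vs
  deriving DecidableEq

def Act.bn : Act → Finset ℕ
  | .tau => ∅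
  | .inp _ _ => ∅
  | .out _ bs _ => bs.toFinset

def Act.names : Act → Finset ℕ
  | .tau => ∅
  | .inp c vs => insert c vs.toFinset
  | .out c bs vs => insert c (bs.toFinset ∪ vs.toFinset)

/-- Early labelled transition system. -/
inductive Step : Proc → Act → Proc → Prop where
  | out {c vs P} : Step (.out c vs P) (.out c [] vs) P
  | inp {c ys P vs} (h : vs.length = ys.length) :
      Step (.inp c ys P) (.inp c vs) (P.rename (listSubst ys vs))
  | parL {P a P' Q} (h : Step P a P') (hf : a.bn ∩ Q.fn = ∅) :
      Step (.par P Q) a (.par P' Q)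
  | parR {P Q a Q'} (h : Step Q a Q') (hf : a.bn ∩ P.fn = ∅) :
      Step (.par P Q) a (.par P Q')
  | commL {P c bs vs P' Q Q'} (h1 : Step P (.out c bs vs) P')
      (h2 : Step Q (.inp c vs) Q') :
      Step (.par P Q) .tau (Proc.nuList bs (.par P' Q'))
  | commR {P c bs vs P' Q Q'} (h1 : Step Q (.out c bs vs) Q')
      (h2 : Step P (.inp c vs) P') :
      Step (.par P Q) .tau (Proc.nuList bs (.par P' Q'))
  | res {P a P' x} (h : Step P a P') (hx : x ∉ a.names) :
      Step (.nu x P) a (.nu x P')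
  | open_ {P c bs vs P' x} (h : Step P (.out c bs vs) P')
      (hc : x ≠ c) (hv : x ∈ vs) (hb : x ∉ bs) :
      Step (.nu x P) (.out c (x :: bs) vs) P'
  | rep {P a P'} (h : Step P a P') : Step (.rep P) a (.par P' (.rep P))
  | repComm {P c bs vs P' P''} (h1 : Step P (.out c bs vs) P')
      (h2 : Step P (.inp c vs) P'') :
      Step (.rep P) .tau (.par (Proc.nuList bs (.par P' P'')) (.rep P))
  | fwdC {p q v y} (h1 : y ≠ q) (h2 : y ≠ v) :
      Step (.fwdC p q) (.inp p [v])
        (.nu y (.par (.out q [y] .nil) (.fwdV y v)))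
  | fwdV {x y p x' q y'} (h1 : q ≠ y) (h2 : q ≠ p) (h3 : q ≠ x') (h4 : q ≠ y')
      (h5 : y' ≠ y) (h6 : y' ≠ p) (h7 : y' ≠ x') :
      Step (.fwdV x y) (.inp x [p, x'])
        (.par (.nu q (.nu y' (.par (.out y [q, y'] .nil)
            (.par (.fwdC q p) (.fwdV y' x'))))) (.fwdV x y))

/-- Zero or more τ-steps. -/
def TauStar : Proc → Proc → Prop :=
  Relation.ReflTransGen (fun P Q => Step P .tau Q)

/-- Weak transition `P ⇒ a ⇒ Q`. -/
def WeakStep (P : Proc) (a : Act) (Q : Proc) : Prop :=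
  ∃ P₁ P₂, TauStar P P₁ ∧ Step P₁ a P₂ ∧ TauStar P₂ Q

/-- Weak "hat" transition: for τ, possibly no step at all. -/
def WeakHat (P : Proc) (a : Act) (Q : Proc) : Prop :=
  (a = .tau ∧ TauStar P Q) ∨ WeakStep P a Q

/-- Single "hat" transition: one step, or (for τ) no step. -/
def StrongHat (P : Proc) (a : Act) (Q : Proc) : Prop :=
  (a = .tau ∧ P = Q) ∨ Step P a Q

/-- `R` is a strong bisimulation. -/
def IsStrongBisim (R : Proc → Proc → Prop) : Prop :=
  ∀ P Q, R P Q →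
    (∀ a P', Step P a P' → ∃ Q', Step Q a Q' ∧ R P' Q') ∧
    (∀ a Q', Step Q a Q' → ∃ P', Step P a P' ∧ R P' Q')

/-- Strong bisimilarity `P ∼ Q`. -/
def Sbisim (P Q : Proc) : Prop := ∃ R, IsStrongBisim R ∧ R P Q

/-- `R` is a weak bisimulation. -/
def IsWeakBisim (R : Proc → Proc → Prop) : Prop :=
  ∀ P Q, R P Q →
    (∀ a P', Step P a P' → ∃ Q', WeakHat Q a Q' ∧ R P' Q') ∧
    (∀ a Q', Step Q a Q' → ∃ P', WeakHat P a P' ∧ R P' Q')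

/-- Weak bisimilarity `P ≈ Q`. -/
def Wbisim (P Q : Proc) : Prop := ∃ R, IsWeakBisim R ∧ R P Q

/-- `R` is an expansion relation: the left process may use at least as many
τ-steps as the right one. -/
def IsExpansion (R : Proc → Proc → Prop) : Prop :=
  ∀ P Q, R P Q →
    (∀ a P', Step P a P' → ∃ Q', StrongHat Q a Q' ∧ R P' Q') ∧
    (∀ a Q', Step Q a Q' → ∃ P', WeakStep P a P' ∧ R P' Q')

/-- The expansion preorder `P ≳ Q`. -/
def Expands (P Q : Proc) : Prop := ∃ R, IsExpansion R ∧ R P Q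

/-! ### The call-by-value λ-calculus -/

inductive Lam where
  | var : ℕ → Lam
  | lam : ℕ → Lam → Lam
  | app : Lam → Lam → Lam
  deriving DecidableEq

def Lam.isValue : Lam → Bool
  | .var _ => true
  | .lam _ _ => true
  | .app _ _ => false

def Lam.fv : Lam → Finset ℕ
  | .var x => {x}
  | .lam x M => M.fv \ {x}
  | .app M N => M.fv ∪ N.fv

/-- Substitution `M.subst x V = M{V/x}` (variables are chosen so that no
capture occurs). -/
def Lam.subst : Lam → ℕ → Lam → Lam
  | .var y, x, V => if y = x then V else .var y
  | .lam y M, x, V => if y = x then .lam y M else .lam y (M.subst x V)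
  | .app M N, x, V => .app (M.subst x V) (N.subst x V)

/-- Call-by-value evaluation contexts E ::= [·] | E M | V E. -/
inductive Ectx where
  | hole : Ectx
  | appL : Ectx → Lam → Ectx
  | appR : (V : Lam) → V.isValue = true → Ectx → Ectx

def Ectx.fill : Ectx → Lam → Lam
  | .hole, M => M
  | .appL E N, M => .app (E.fill M) N
  | .appR V _ E, M => .app V (E.fill M)

/-- β_v-reduction `M →_v N`. -/
inductive BetaV : Lam → Lam → Prop where
  | beta (E : Ectx) (x : ℕ) (M V : Lam) (hV : V.isValue = true) :
      BetaV (E.fill (.app (.lam x M) V)) (E.fill (M.subst x V))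

/-- The `k`-th name fresh for the finite set `s`. -/
def freshName (s : Finset ℕ) (k : ℕ) : ℕ := s.sup id + 1 + k

/-! ### Milner's call-by-value encoding (free outputs) -/

def encM : Lam → ℕ → Proc
  | .var x, p => .out p [x] .nil
  | .lam x M, p =>
      let s := insert p (insert x M.fv)
      let y := freshName s 0; let q := freshName s 1
      .nu y (.out p [y] (.rep (.inp y [x, q] (encM M q))))
  | .app M N, p =>
      let s := insert p (M.fv ∪ N.fv)
      let q := freshName s 0; let r := freshName s 1
      let v := freshName s 2; let w := freshName s 3
      .nu q (.par (encM M q)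
        (.inp q [v] (.nu r (.par (encM N r)
          (.inp r [w] (.out v [w, p] .nil))))))

/-! ### The internal-π call-by-value encoding and its optimised variant -/

/-- The process `W = ȳ(w',p').(w'⇝w | p'⇝p)`. -/
def Wproc (y w p w' p' : ℕ) : Proc :=
  Proc.boundOut y [w', p'] (.par (.fwdV w' w) (.fwdC p' p))

/-- The (unoptimised) internal-π call-by-value encoding `⟦M⟧p`. -/
def enc : Lam → ℕ → Proc
  | .var x, p =>
      let y := freshName {p, x} 0
      .nu y (.out p [y] (.fwdV y x))
  | .lam x M, p =>
      let s := insert p (insert x M.fv)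
      let y := freshName s 0; let q := freshName s 1
      .nu y (.out p [y] (.rep (.inp y [x, q] (enc M q))))
  | .app M N, p =>
      let s := insert p (M.fv ∪ N.fv)
      let q := freshName s 0; let r := freshName s 1
      let y := freshName s 2; let w := freshName s 3
      let w' := freshName s 4; let p' := freshName s 5
      .nu q (.par (enc M q)
        (.inp q [y] (.nu r (.par (enc N r)
          (.inp r [w] (Wproc y w p w' p'))))))

mutual
  /-- The optimised internal-π call-by-value encoding `⟦M⟧ᵒp`. -/
  def encO : Lam → ℕ → Proc
    | .var x, p =>
        let y := freshName {p, x} 0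
        .nu y (.out p [y] (.fwdV y x))
    | .lam x M, p =>
        let s := insert p (insert x M.fv)
        let y := freshName s 0; let q := freshName s 1
        .nu y (.out p [y] (.rep (.inp y [x, q] (encO M q))))
    | .app (.var x) N, p =>
        let s := insert p (insert x N.fv)
        let z := freshName s 0; let q := freshName s 1
        let r := freshName s 2; let w := freshName s 3
        let y := freshName s 4
        let w' := freshName s 5; let p' := freshName s 6
        if N.isValue then
          -- ⟦x V⟧p = x̄(z,q).(⟦V⟧ᵥz | q⇝p)
          Proc.boundOut x [z, q] (.par (encVO N z) (.fwdC q p))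
        else
          -- ⟦V N⟧p = νy(⟦V⟧ᵥy | νr(⟦N⟧r | r(w).W))
          .nu y (.par (encVO (.var x) y)
            (.nu r (.par (encO N r) (.inp r [w] (Wproc y w p w' p')))))
    | .app (.lam x M) N, p =>
        let s := insert p (insert x (M.fv ∪ N.fv))
        let y := freshName s 0; let w := freshName s 1
        let r := freshName s 2
        let w' := freshName s 3; let p' := freshName s 4
        if N.isValue then
          -- ⟦(λx.M)V⟧p = νy,w(⟦λx.M⟧ᵥy | ⟦V⟧ᵥw | W)
          .nu y (.nu w (.par (encVO (.lam x M) y)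
            (.par (encVO N w) (Wproc y w p w' p'))))
        else
          -- ⟦V N⟧p = νy(⟦V⟧ᵥy | νr(⟦N⟧r | r(w).W))
          .nu y (.par (encVO (.lam x M) y)
            (.nu r (.par (encO N r) (.inp r [w] (Wproc y w p w' p')))))
    | .app (.app M₁ M₂) N, p =>
        let M := Lam.app M₁ M₂
        let s := insert p (M.fv ∪ N.fv)
        let q := freshName s 0; let r := freshName s 1
        let y := freshName s 2; let w := freshName s 3
        let w' := freshName s 4; let p' := freshName s 5
        if N.isValue then
          -- ⟦M V⟧p = νq(⟦M⟧q | q(y).νw(⟦V⟧ᵥw | W))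
          .nu q (.par (encO (.app M₁ M₂) q)
            (.inp q [y] (.nu w (.par (encVO N w) (Wproc y w p w' p')))))
        else
          -- ⟦M N⟧p = νq(⟦M⟧q | q(y).νr(⟦N⟧r | r(w).W))
          .nu q (.par (encO (.app M₁ M₂) q)
            (.inp q [y] (.nu r (.par (encO N r)
              (.inp r [w] (Wproc y w p w' p'))))))

  /-- The value clause `⟦V⟧ᵥy` of the optimised encoding. -/
  def encVO : Lam → ℕ → Proc
    | .var z, y => .fwdV y z
    | .lam z M, y =>
        let q := freshName (insert y (insert z M.fv)) 0
        .rep (.inp y [z, q] (encO M q))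
    | .app _ _, _ => .nil
end
/-- The free name `x` occurs in `P` only as the subject of outputs:
never as the subject of an input, nor as a transmitted object. -/
def OnlyOutSubj (x : ℕ) : Proc → Prop
  | .nil => True
  | .out _ vs P => x ∉ vs ∧ OnlyOutSubj x P
  | .inp c ys P => c ≠ x ∧ (x ∈ ys ∨ OnlyOutSubj x P)
  | .par P Q => OnlyOutSubj x P ∧ OnlyOutSubj x Q
  | .nu y P => x = y ∨ OnlyOutSubj x P
  | .rep P => OnlyOutSubj x P
  | .fwdC p _ => x ≠ p
  | .fwdV a _ => x ≠ a


lemma oos_nu {x y : ℕ} {P : Proc} (h : x ≠ y → OnlyOutSubj x P) :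
    OnlyOutSubj x (.nu y P) := by
  by_cases hxy : x = y
  · exact Or.inl hxy
  · exact Or.inr (h hxy)

lemma oos_W (x y w p w' p' : ℕ) : OnlyOutSubj x (Wproc y w p w' p') := by
  unfold Wproc Proc.boundOut
  simp only [List.foldr]
  refine oos_nu fun h1 => oos_nu fun h2 => ?_
  simp [OnlyOutSubj, h1, h2]

lemma key (M : Lam) :
    (∀ p x, x ≠ p → OnlyOutSubj x (encO M p)) ∧
    (∀ y x, x ≠ y → OnlyOutSubj x (encVO M y)) := by
  induction M with
  | var z =>
    constructor
    · intro p x hxp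
      simp only [encO]
      refine oos_nu fun hxy => ?_
      simp [OnlyOutSubj, hxy]
    · intro y x hxy
      simp [encVO, OnlyOutSubj, hxy]
  | lam z M ih =>
    obtain ⟨ihO, _⟩ := ih
    have body : ∀ y q x : ℕ, x ≠ y →
        OnlyOutSubj x (Proc.rep (.inp y [z, q] (encO M q))) := by
      intro y q x hxy
      refine ⟨fun h => hxy h.symm, ?_⟩
      by_cases hz : x = z
      · exact Or.inl (by simp [hz])
      by_cases hq : x = q
      · exact Or.inl (by simp [hq])
      · exact Or.inr (ihO q x hq)
    constructor
    · intro p x hxp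
      simp only [encO]
      refine oos_nu fun hxy => ?_
      exact ⟨by simp [hxy], body _ _ _ hxy⟩
    · intro y x hxy
      simp only [encVO]
      exact body _ _ _ hxy
  | app M₁ N ih1 ih2 =>
    refine ⟨?_, fun y x hxy => by simp [encVO, OnlyOutSubj]⟩
    intro p x hxp
    cases M₁ with
    | var x' =>
      by_cases hN : N.isValue = true
      · simp only [encO, hN, if_true]
        unfold Proc.boundOut
        simp only [List.foldr]
        refine oos_nu fun hz => oos_nu fun hq => ?_
        refine ⟨by simp [hz, hq], ih2.2 _ _ hz, hq⟩
      · simp only [encO, hN, if_false, Bool.false_eq_true]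
        refine oos_nu fun hy => ?_
        refine ⟨ih1.2 _ _ hy, ?_⟩
        refine oos_nu fun hr => ?_
        refine ⟨ih2.1 _ _ hr, fun h => hr h.symm, ?_⟩
        by_cases hw : x = freshName (insert p (insert x' N.fv)) 3
        · exact Or.inl (by simp [hw])
        · exact Or.inr (oos_W _ _ _ _ _ _)
    | lam z B =>
      by_cases hN : N.isValue = true
      · simp only [encO, hN, if_true]
        refine oos_nu fun hy => oos_nu fun hw => ?_
        exact ⟨ih1.2 _ _ hy, ih2.2 _ _ hw, oos_W _ _ _ _ _ _⟩
      · simp only [encO, hN, if_false, Bool.false_eq_true]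
        refine oos_nu fun hy => ?_
        refine ⟨ih1.2 _ _ hy, ?_⟩
        refine oos_nu fun hr => ?_
        refine ⟨ih2.1 _ _ hr, fun h => hr h.symm, ?_⟩
        by_cases hw : x = freshName (insert p (insert z (B.fv ∪ N.fv))) 1
        · exact Or.inl (by simp [hw])
        · exact Or.inr (oos_W _ _ _ _ _ _)
    | app A B =>
      by_cases hN : N.isValue = true
      · simp only [encO, hN, if_true]
        refine oos_nu fun hq => ?_
        refine ⟨ih1.1 _ _ hq, fun h => hq h.symm, ?_⟩
        by_cases hy : x = freshName (insert p ((A.app B).fv ∪ N.fv)) 2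
        · exact Or.inl (by simp [hy])
        refine Or.inr (oos_nu fun hw => ?_)
        exact ⟨ih2.2 _ _ hw, oos_W _ _ _ _ _ _⟩
      · simp only [encO, hN, if_false, Bool.false_eq_true]
        refine oos_nu fun hq => ?_
        refine ⟨ih1.1 _ _ hq, fun h => hq h.symm, ?_⟩
        by_cases hy : x = freshName (insert p ((A.app B).fv ∪ N.fv)) 2
        · exact Or.inl (by simp [hy])
        refine Or.inr (oos_nu fun hr => ?_)
        refine ⟨ih2.1 _ _ hr, fun h => hr h.symm, ?_⟩
        by_cases hw : x = freshName (insert p ((A.app B).fv ∪ N.fv)) 3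
        · exact Or.inl (by simp [hw])
        · exact Or.inr (oos_W _ _ _ _ _ _)

/-- a free variable `x` of `M` appears in `⟦M⟧p` only in
output subject position. -/
theorem encO_fv_out_subject (M : Lam) (x : ℕ) (hx : x ∈ M.fv)
    (p : ℕ) (hxp : x ≠ p) :
    OnlyOutSubj x (encO M p) :=
  (key M).1 p x hxp
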